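/- Let F : \mathbb{R} \to \mathbb{R} be the analytic odd extension of r \mapsto \sqrt{r \tanh r}. Then F' does not vanish on \mathbb{R}, and F'' vanishes only at the origin, where it has a simple zero (i.e. F''(0) = 0 and F'''(0) \neq 0). -/

import Mathlib

/-!
Squaring removes the square root: by oddness `F * F = r tanh r` on all of `ℝ`, and differentiating
this identity with the Leibniz rule ties the derivatives of `F` to those of `g r = r tanh r`, which
are polynomials in `r` and `t = tanh r`. For `r ≠ 0` we have `2 F F' = g' ≠ 0` and
`4 F³ F'' = 2 g g'' - g'² = -((t - r (1 - t²))² + 4 (r t)² (1 - t²)) < 0`. At `0`, where `F 0 = 0`,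
the second, third and fourth derivatives of the identity give `F'(0)² = 1`, `F''(0) = 0` and
`F'(0) F'''(0) = -1`.
-/

open Real

namespace Real

theorem hasDerivAt_tanh (x : ℝ) : HasDerivAt tanh (1 - tanh x ^ 2) x := by
  have h := (hasDerivAt_sinh x).fun_div (hasDerivAt_cosh x) (cosh_pos x).ne'
  rw [funext tanh_eq_sinh_div_cosh]
  refine h.congr_deriv ?_
  field_simp

theorem deriv_tanh : deriv tanh = fun x => 1 - tanh x ^ 2 :=
  funext fun x => (hasDerivAt_tanh x).deriv

theorem contDiff_tanh {n : WithTop ℕ∞} : ContDiff ℝ n tanh := by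
  rw [funext tanh_eq_sinh_div_cosh]
  exact contDiff_sinh.div contDiff_cosh fun x => (cosh_pos x).ne'

theorem iteratedDeriv_two_tanh :
    iteratedDeriv 2 tanh = fun x => -2 * tanh x * (1 - tanh x ^ 2) := by
  rw [iteratedDeriv_succ, iteratedDeriv_one, deriv_tanh]
  funext x
  rw [(((hasDerivAt_tanh x).fun_pow 2).const_sub 1).deriv]
  ring

theorem iteratedDeriv_three_tanh_zero : iteratedDeriv 3 tanh 0 = -2 := by
  rw [iteratedDeriv_succ, iteratedDeriv_two_tanh, (((hasDerivAt_tanh 0).const_mul (-2)).fun_mul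
    (((hasDerivAt_tanh 0).fun_pow 2).const_sub 1)).deriv]
  simp

theorem mul_tanh_pos {x : ℝ} (hx : x ≠ 0) : 0 < x * tanh x := by
  rw [tanh_eq_sinh_div_cosh, ← mul_div_assoc]
  refine div_pos ?_ (cosh_pos x)
  rcases hx.lt_or_gt with hx | hx
  · exact mul_pos_of_neg_of_neg hx (sinh_neg_iff.2 hx)
  · exact mul_pos hx (sinh_pos_iff.2 hx)

end Real

section
variable {𝕜 : Type*} [NontriviallyNormedField 𝕜] {f : 𝕜 → 𝕜} {x : 𝕜}

theorem iteratedDeriv_succ_fun_id_mul {n : ℕ} (hf : ContDiffAt 𝕜 (n + 1) f x) :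
    iteratedDeriv (n + 1) (fun y => y * f y) x =
      x * iteratedDeriv (n + 1) f x + (n + 1) * iteratedDeriv n f x := by
  rw [iteratedDeriv_fun_mul (by fun_prop) hf, Finset.sum_range_succ', Finset.sum_range_succ']
  simp [iteratedDeriv_fun_id, add_comm]

theorem deriv_mul_self (hf : ContDiffAt 𝕜 1 f x) :
    deriv (f * f) x = 2 * f x * deriv f x := by
  rw [← iteratedDeriv_one, iteratedDeriv_mul hf hf]
  simp only [Finset.sum_range_succ, Finset.sum_range_zero, Nat.choose, iteratedDeriv_zero,
    iteratedDeriv_one, Nat.reduceAdd, tsub_zero, tsub_self]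
  push_cast
  ring

theorem iteratedDeriv_two_mul_self (hf : ContDiffAt 𝕜 2 f x) :
    iteratedDeriv 2 (f * f) x = 2 * deriv f x ^ 2 + 2 * f x * iteratedDeriv 2 f x := by
  rw [iteratedDeriv_mul hf hf]
  simp only [Finset.sum_range_succ, Finset.sum_range_zero, Nat.choose, iteratedDeriv_zero,
    iteratedDeriv_one, Nat.reduceAdd, Nat.reduceSub, tsub_zero, tsub_self]
  push_cast
  ring

theorem iteratedDeriv_three_mul_self (hf : ContDiffAt 𝕜 3 f x) :
    iteratedDeriv 3 (f * f) x =
      6 * deriv f x * iteratedDeriv 2 f x + 2 * f x * iteratedDeriv 3 f x := by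
  rw [iteratedDeriv_mul hf hf]
  simp only [Finset.sum_range_succ, Finset.sum_range_zero, Nat.choose, iteratedDeriv_zero,
    iteratedDeriv_one, Nat.reduceAdd, Nat.reduceSub, tsub_zero, tsub_self]
  push_cast
  ring

theorem iteratedDeriv_four_mul_self (hf : ContDiffAt 𝕜 4 f x) :
    iteratedDeriv 4 (f * f) x = 6 * iteratedDeriv 2 f x ^ 2 +
      8 * deriv f x * iteratedDeriv 3 f x + 2 * f x * iteratedDeriv 4 f x := by
  rw [iteratedDeriv_mul hf hf]
  simp only [Finset.sum_range_succ, Finset.sum_range_zero, Nat.choose, iteratedDeriv_zero,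
    iteratedDeriv_one, Nat.reduceAdd, Nat.reduceSub, tsub_zero, tsub_self]
  push_cast
  ring

theorem four_mul_pow_three_mul_iteratedDeriv_two (hf : ContDiffAt 𝕜 2 f x) :
    4 * f x ^ 3 * iteratedDeriv 2 f x =
      2 * (f * f) x * iteratedDeriv 2 (f * f) x - deriv (f * f) x ^ 2 := by
  rw [iteratedDeriv_two_mul_self hf, deriv_mul_self (hf.of_le (by norm_num))]
  simp only [Pi.mul_apply]
  ring

end

section
variable {x : ℝ}

theorem deriv_mul_tanh : deriv (fun r => r * tanh r) x = tanh x + x * (1 - tanh x ^ 2) := by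
  rw [((hasDerivAt_id' x).fun_mul (hasDerivAt_tanh x)).deriv]
  simp

theorem iteratedDeriv_two_mul_tanh :
    iteratedDeriv 2 (fun r => r * tanh r) x =
      x * (-2 * tanh x * (1 - tanh x ^ 2)) + 2 * (1 - tanh x ^ 2) := by
  rw [iteratedDeriv_succ_fun_id_mul contDiff_tanh.contDiffAt, iteratedDeriv_two_tanh,
    iteratedDeriv_one, deriv_tanh]
  norm_num

theorem iteratedDeriv_three_mul_tanh_zero : iteratedDeriv 3 (fun r => r * tanh r) 0 = 0 := by
  rw [iteratedDeriv_succ_fun_id_mul contDiff_tanh.contDiffAt, iteratedDeriv_two_tanh]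
  simp

theorem iteratedDeriv_four_mul_tanh_zero : iteratedDeriv 4 (fun r => r * tanh r) 0 = -8 := by
  rw [iteratedDeriv_succ_fun_id_mul contDiff_tanh.contDiffAt, iteratedDeriv_three_tanh_zero]
  norm_num

theorem deriv_mul_tanh_ne_zero (hx : x ≠ 0) : deriv (fun r => r * tanh r) x ≠ 0 := by
  have hs : 0 < 1 - tanh x ^ 2 := sub_pos.2 (tanh_sq_lt_one x)
  have : 0 < x * deriv (fun r => r * tanh r) x := by
    rw [deriv_mul_tanh, mul_add, ← mul_assoc, ← sq]
    exact add_pos (mul_tanh_pos hx) (mul_pos (by positivity) hs)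
  exact right_ne_zero_of_mul this.ne'

theorem two_mul_mul_tanh_mul_iteratedDeriv_two_lt (hx : x ≠ 0) :
    2 * (x * tanh x) * iteratedDeriv 2 (fun r => r * tanh r) x <
      deriv (fun r => r * tanh r) x ^ 2 := by
  have hs : 0 < 1 - tanh x ^ 2 := sub_pos.2 (tanh_sq_lt_one x)
  have ht := mul_tanh_pos hx
  rw [iteratedDeriv_two_mul_tanh, deriv_mul_tanh, ← sub_pos]
  calc 0 < (tanh x - x * (1 - tanh x ^ 2)) ^ 2 + 4 * (x * tanh x) ^ 2 * (1 - tanh x ^ 2) := by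
        positivity
    _ = _ := by ring

end

theorem mul_self_eq_mul_tanh {F : ℝ → ℝ} (hval : ∀ r : ℝ, 0 ≤ r → F r = √(r * tanh r))
    (hodd : ∀ r : ℝ, F (-r) = -F r) : F * F = fun r => r * tanh r := by
  funext r
  wlog hr : 0 ≤ r
  · simpa [hodd, tanh_neg] using this hval hodd (-r) (by linarith)
  rw [Pi.mul_apply, hval r hr, mul_self_sqrt]
  rcases hr.eq_or_lt with rfl | hr
  · simp
  · exact (mul_tanh_pos hr.ne').le

theorem deriv_properties_of_extension (F : ℝ → ℝ)
    (hval : ∀ r : ℝ, 0 ≤ r → F r = Real.sqrt (r * Real.tanh r))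
    (hanal : AnalyticOn ℝ F Set.univ)
    (hodd : ∀ r : ℝ, F (-r) = -F r) :
    (∀ r : ℝ, deriv F r ≠ 0) ∧
    (∀ r : ℝ, iteratedDeriv 2 F r = 0 ↔ r = 0) ∧
    iteratedDeriv 3 F 0 ≠ 0 := by
  have hsq := mul_self_eq_mul_tanh hval hodd
  have hF (x : ℝ) : ContDiffAt ℝ 4 F x := hanal.contDiff.contDiffAt
  have hF0 : F 0 = 0 := by simpa using hval 0 le_rfl
  have hF'0 : deriv F 0 ≠ 0 := by
    have h := iteratedDeriv_two_mul_self ((hF 0).of_le (by norm_num))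
    rw [hsq, iteratedDeriv_two_mul_tanh, hF0] at h
    intro h0
    simp [h0] at h
  have hF''0 : iteratedDeriv 2 F 0 = 0 := by
    have h := iteratedDeriv_three_mul_self ((hF 0).of_le (by norm_num))
    rw [hsq, iteratedDeriv_three_mul_tanh_zero, hF0] at h
    simpa [hF'0] using h
  refine ⟨fun r => ?_, fun r => ⟨fun h => ?_, fun h => h ▸ hF''0⟩, ?_⟩
  · rcases eq_or_ne r 0 with rfl | hr
    · exact hF'0
    have h := deriv_mul_self ((hF r).of_le (by norm_num))
    rw [hsq] at h
    intro h0
    exact deriv_mul_tanh_ne_zero hr (by simp [h, h0])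
  · by_contra hr
    have h' := four_mul_pow_three_mul_iteratedDeriv_two ((hF r).of_le (by norm_num))
    rw [h, hsq] at h'
    linarith [two_mul_mul_tanh_mul_iteratedDeriv_two_lt hr]
  · have h := iteratedDeriv_four_mul_self (hF 0)
    rw [hsq, iteratedDeriv_four_mul_tanh_zero, hF0, hF''0] at h
    intro h0
    simp [h0] at h
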